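/- Let P₁ and P₂ be shortest paths in an undirected positively-weighted graph that traverse a common edge (a,b) in the same direction. Then P₁ and P₂ agree: the first vertex of P₁ in P₁ ∩ P₂ equals the first vertex of P₂ in P₁ ∩ P₂, and |P₁ ∩ P₂| ≥ 2. -/

import Mathlib

/-!
Along a shortest path the distance is additive and positive: if `x, y, z` occur in this order,
then `dist x y + dist y z = dist x z` and `0 < dist x y`. With `dist` symmetric, comparing these
identities on two shortest paths shows that a vertex `y` lying between `x` and `z` on one of them
cannot precede both `x` and `z` on the other.

Let `v₁` and `v₂` be the first common vertices of `P₁` and `P₂`. Applied to `v₂, a, b` on `P₂`,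
this shows that `v₂` precedes `b` on `P₁`. If `v₁ ≠ v₂`, then `v₂` lies between `v₁` and `b` on
`P₁` yet precedes both on `P₂`, which is impossible. The common vertices `a ≠ b` give the bound
on the cardinality.
-/

/-- A graph with real edge weights that are strictly positive on edges. -/
structure WeightedGraph (V : Type*) where
  Adj : V → V → Prop
  w : V → V → ℝ
  pos : ∀ {u v : V}, Adj u v → 0 < w u v

namespace WeightedGraph

variable {V : Type*} (G : WeightedGraph V)

/-- The graph is undirected: adjacency and weights are symmetric. -/
def IsUndirected : Prop :=
  (∀ u v, G.Adj u v → G.Adj v u) ∧ (∀ u v, G.w u v = G.w v u)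

/-- Total weight of a vertex sequence (sum of weights of consecutive pairs). -/
def weight (l : List V) : ℝ :=
  ((l.zip l.tail).map fun p => G.w p.1 p.2).sum

/-- A (simple) path: a nonempty sequence of distinct vertices with consecutive
vertices adjacent. -/
def IsPath (l : List V) : Prop :=
  l ≠ [] ∧ l.Chain' G.Adj ∧ l.Nodup

/-- A path beginning at `u` and ending at `v`. -/
def IsPathFrom (l : List V) (u v : V) : Prop :=
  G.IsPath l ∧ l.head? = some u ∧ l.getLast? = some v

/-- A shortest path between its endpoints: a path whose total weight is at most
that of any path with the same endpoints. -/
def IsShortest (l : List V) : Prop :=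
  G.IsPath l ∧ ∀ l', G.IsPath l' → l'.head? = l.head? → l'.getLast? = l.getLast? →
    G.weight l ≤ G.weight l'

/-- Weighted graph distance from `u` to `v`. -/
noncomputable def dist (u v : V) : ℝ :=
  sInf {c : ℝ | ∃ l, G.IsPathFrom l u v ∧ G.weight l = c}

end WeightedGraph

/-- `v` is the first vertex of `P` lying in the set `S`. -/
def FirstIn {V : Type*} (P : List V) (S : Set V) (v : V) : Prop :=
  v ∈ S ∧ ∃ pre post : List V, P = pre ++ v :: post ∧ ∀ x ∈ pre, x ∉ S

/-- `v` is the last vertex of `P` lying in the set `S`. -/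
def LastIn {V : Type*} (P : List V) (S : Set V) (v : V) : Prop :=
  v ∈ S ∧ ∃ pre post : List V, P = pre ++ v :: post ∧ ∀ x ∈ post, x ∉ S

open scoped List

namespace List

variable {α : Type*}

theorem exists_eq_append_cons_of_cons_sublist {a : α} {m l : List α} (h : a :: m <+ l) :
    ∃ A B, l = A ++ a :: B ∧ m <+ B := by
  obtain ⟨r₁, r₂, rfl, ha, hm⟩ := cons_sublist_iff.mp h
  obtain ⟨A, B, rfl⟩ := append_of_mem ha
  exact ⟨A, B ++ r₂, by simp, hm.trans (sublist_append_right B r₂)⟩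

theorem exists_eq_of_pair_sublist {x y : α} {l : List α} (h : [x, y] <+ l) :
    ∃ A B C, l = A ++ x :: (B ++ y :: C) := by
  obtain ⟨A, B', rfl, hy⟩ := exists_eq_append_cons_of_cons_sublist h
  obtain ⟨B, C, rfl⟩ := append_of_mem (singleton_sublist.mp hy)
  exact ⟨A, B, C, rfl⟩

theorem exists_eq_of_triple_sublist {x y z : α} {l : List α} (h : [x, y, z] <+ l) :
    ∃ A B C D, l = A ++ x :: (B ++ y :: (C ++ z :: D)) := by
  obtain ⟨A, B', rfl, hyz⟩ := exists_eq_append_cons_of_cons_sublist h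
  obtain ⟨B, C, D, rfl⟩ := exists_eq_of_pair_sublist hyz
  exact ⟨A, B, C, D, rfl⟩

theorem pair_sublist_or_pair_sublist {x y : α} {l : List α} (hx : x ∈ l) (hy : y ∈ l)
    (hne : x ≠ y) : [x, y] <+ l ∨ [y, x] <+ l := by
  induction l with
  | nil => simp at hx
  | cons a l ih =>
    rcases mem_cons.mp hx with rfl | hxl
    · exact .inl ((singleton_sublist.mpr ((mem_cons.mp hy).resolve_left hne.symm)).cons_cons x)
    rcases mem_cons.mp hy with rfl | hyl
    · exact .inr ((singleton_sublist.mpr hxl).cons_cons y)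
    exact (ih hxl hyl).imp (·.cons a) (·.cons a)

theorem Nodup.triple_sublist {x y z : α} {l : List α} (hl : l.Nodup) (hxy : [x, y] <+ l)
    (hyz : [y, z] <+ l) : [x, y, z] <+ l := by
  induction l with
  | nil => simp at hxy
  | cons a l ih =>
    obtain ⟨ha, hl⟩ := nodup_cons.mp hl
    rcases sublist_cons_iff.mp hxy with hxy' | ⟨_, ⟨rfl, -⟩, hy⟩
    · rcases sublist_cons_iff.mp hyz with hyz' | ⟨_, ⟨rfl, -⟩, -⟩
      · exact (ih hl hxy' hyz').cons a
      · exact absurd (hxy'.subset (mem_cons_of_mem x (mem_singleton_self _))) ha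
    · rcases sublist_cons_iff.mp hyz with hyz' | ⟨_, ⟨rfl, -⟩, -⟩
      · exact hyz'.cons_cons x
      · exact absurd (singleton_sublist.mp hy) ha

theorem IsChain.replace_infix {R : α → α → Prop} {A M M' D : List α}
    (h : (A ++ M ++ D).IsChain R) (hM' : M'.IsChain R) (hh : M'.head? = M.head?)
    (hl : M'.getLast? = M.getLast?) : (A ++ M' ++ D).IsChain R := by
  simp only [isChain_append, getLast?_append, hh, hl] at h ⊢
  exact ⟨⟨h.1.1, hM', h.1.2.2⟩, h.2⟩

end List

section FirstIn

variable {V : Type*} {P : List V} {S : Set V}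

lemma exists_firstIn (h : ∃ x ∈ P, x ∈ S) : ∃ v, FirstIn P S v := by
  induction P with
  | nil => simp at h
  | cons a P ih =>
    by_cases ha : a ∈ S
    · exact ⟨a, ha, [], P, rfl, by simp⟩
    obtain ⟨x, hx, hxS⟩ := h
    obtain ⟨v, hvS, pre, post, rfl, hpre⟩ :=
      ih ⟨x, (List.mem_cons.mp hx).resolve_left (ne_of_mem_of_not_mem hxS ha), hxS⟩
    exact ⟨v, hvS, a :: pre, post, rfl, by simpa [ha] using hpre⟩

lemma FirstIn.pair_sublist {v s : V} (hv : FirstIn P S v) (hs : s ∈ S) (hsP : s ∈ P)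
    (hne : s ≠ v) : [v, s] <+ P := by
  obtain ⟨-, pre, post, rfl, hpre⟩ := hv
  have hs_post : s ∈ post := by
    rcases List.mem_append.mp hsP with h | h
    · exact absurd hs (hpre s h)
    · exact (List.mem_cons.mp h).resolve_left hne
  exact ((List.singleton_sublist.mpr hs_post).cons_cons v).trans (List.sublist_append_right _ _)

end FirstIn

namespace WeightedGraph

variable {V : Type*} (G : WeightedGraph V)

@[simp] lemma weight_nil : G.weight [] = 0 := rfl

@[simp] lemma weight_singleton (u : V) : G.weight [u] = 0 := rfl

@[simp] lemma weight_cons_cons (u v : V) (l : List V) :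
    G.weight (u :: v :: l) = G.w u v + G.weight (v :: l) := by
  simp [weight]

lemma weight_append_cons (A : List V) (y : V) (B : List V) :
    G.weight (A ++ y :: B) = G.weight (A ++ [y]) + G.weight (y :: B) := by
  induction A with
  | nil => simp
  | cons a A ih =>
    cases A with
    | nil => simp
    | cons c A => simp only [List.cons_append, weight_cons_cons] at ih ⊢; rw [ih]; ring

lemma weight_append_of_head? {A l : List V} {u : V} (hu : l.head? = some u) :
    G.weight (A ++ l) = G.weight (A ++ [u]) + G.weight l := by
  obtain ⟨m, rfl⟩ : ∃ m, l = u :: m := List.head?_eq_some_iff.mp hu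
  exact G.weight_append_cons A u m

lemma weight_append_of_getLast? {l D : List V} {v : V} (hv : l.getLast? = some v) :
    G.weight (l ++ D) = G.weight l + G.weight (v :: D) := by
  obtain ⟨n, rfl⟩ : ∃ n, l = n ++ [v] := List.getLast?_eq_some_iff.mp hv
  simpa using G.weight_append_cons n v D

lemma weight_append_append {A l D : List V} {u v : V} (hu : l.head? = some u)
    (hv : l.getLast? = some v) :
    G.weight (A ++ l ++ D) = G.weight (A ++ [u]) + G.weight l + G.weight (v :: D) := by
  rw [List.append_assoc, G.weight_append_of_head? (u := u) (by simp [hu]),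
    G.weight_append_of_getLast? hv, add_assoc]

variable {G}

lemma weight_nonneg {l : List V} (h : l.IsChain G.Adj) : 0 ≤ G.weight l := by
  induction l with
  | nil => simp
  | cons a l ih =>
    cases l with
    | nil => simp
    | cons b l =>
      rw [List.isChain_cons_cons] at h
      rw [weight_cons_cons]
      exact add_nonneg (G.pos h.1).le (ih h.2)

lemma weight_pos {u : V} {l : List V} (h : (u :: l).IsChain G.Adj) (hl : l ≠ []) :
    0 < G.weight (u :: l) := by
  obtain ⟨v, l, rfl⟩ := List.exists_cons_of_ne_nil hl
  rw [List.isChain_cons_cons] at h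
  rw [weight_cons_cons]
  exact add_pos_of_pos_of_nonneg (G.pos h.1) (weight_nonneg h.2)

lemma weight_reverse (hG : G.IsUndirected) (l : List V) : G.weight l.reverse = G.weight l := by
  induction l with
  | nil => rfl
  | cons a l ih =>
    cases l with
    | nil => rfl
    | cons b l =>
      rw [List.reverse_cons, G.weight_append_of_getLast? (v := b) (by simp), ih]
      simp [hG.2 b a, add_comm]

lemma exists_isPath_le_of_isChain {l : List V} (hne : l ≠ []) (hc : l.IsChain G.Adj) :
    ∃ p, G.IsPath p ∧ p.head? = l.head? ∧ p.getLast? = l.getLast? ∧ G.weight p ≤ G.weight l := by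
  induction hn : l.length using Nat.strong_induction_on generalizing l with
  | _ n ih =>
  by_cases hnd : l.Nodup
  · exact ⟨l, ⟨hne, hc, hnd⟩, rfl, rfl, le_rfl⟩
  obtain ⟨a, haa⟩ := not_forall_not.mp (mt List.nodup_iff_sublist.mpr hnd)
  obtain ⟨A, B, C, rfl⟩ := List.exists_eq_of_pair_sublist haa
  -- the repeated vertex `a` closes the loop `a :: B ++ [a]`, which we cut out
  rw [show A ++ a :: (B ++ a :: C) = A ++ (a :: B ++ [a]) ++ C by simp] at hc hn ⊢
  have hc' : (A ++ [a] ++ C).IsChain G.Adj := hc.replace_infix (List.isChain_singleton a)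
    rfl (by simp [List.getLast?_cons])
  obtain ⟨p, hp, hph, hpl, hpw⟩ := ih _ (by simp [← hn]) (by simp) hc' rfl
  refine ⟨p, hp, by simp [hph], by simp [hpl, List.getLast?_cons], hpw.trans ?_⟩
  have hloop := weight_nonneg (hc.infix ⟨A, C, rfl⟩)
  rw [G.weight_append_append (u := a) (v := a) rfl rfl,
    G.weight_append_append (u := a) (v := a) rfl (List.getLast?_concat ..)]
  simpa using hloop

lemma IsShortest.of_infix {P l : List V} (hP : G.IsShortest P) (h : l <:+: P) (hl : l ≠ []) :
    G.IsShortest l := by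
  obtain ⟨A, D, rfl⟩ := h
  refine ⟨⟨hl, hP.1.2.1.infix ⟨A, D, rfl⟩, hP.1.2.2.sublist (List.infix_append A l D).sublist⟩, ?_⟩
  intro l' hl' hh hlast
  obtain ⟨u, hu⟩ := Option.ne_none_iff_exists'.mp (mt List.head?_eq_none_iff.mp hl)
  obtain ⟨v, hv⟩ := Option.ne_none_iff_exists'.mp (mt List.getLast?_eq_none_iff.mp hl)
  obtain ⟨p, hp, hph, hpl, hpw⟩ := exists_isPath_le_of_isChain (l := A ++ l' ++ D)
    (by simp [hl'.1]) (hP.1.2.1.replace_infix hl'.2.1 hh hlast)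
  have hPp := hP.2 p hp (by simp [hph, hh]) (by simp [hpl, hlast])
  rw [G.weight_append_append hu hv] at hPp
  rw [G.weight_append_append (hh.trans hu) (hlast.trans hv)] at hpw
  linarith

lemma dist_le_weight {l : List V} {u v : V} (h : G.IsPathFrom l u v) :
    G.dist u v ≤ G.weight l :=
  csInf_le ⟨0, by rintro _ ⟨l', hl', rfl⟩; exact weight_nonneg hl'.1.2.1⟩ ⟨l, h, rfl⟩

lemma IsShortest.dist_eq_weight {l : List V} {u v : V} (hl : G.IsShortest l)
    (hu : l.head? = some u) (hv : l.getLast? = some v) : G.dist u v = G.weight l :=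
  (dist_le_weight ⟨hl.1, hu, hv⟩).antisymm <| le_csInf ⟨_, l, ⟨hl.1, hu, hv⟩, rfl⟩ <| by
    rintro _ ⟨l', ⟨hl', hu', hv'⟩, rfl⟩
    exact hl.2 l' hl' (hu'.trans hu.symm) (hv'.trans hv.symm)

lemma IsPathFrom.reverse {l : List V} {u v : V} (hG : G.IsUndirected) (h : G.IsPathFrom l u v) :
    G.IsPathFrom l.reverse v u :=
  ⟨⟨by simpa using h.1.1, List.isChain_reverse.mpr (h.1.2.1.imp fun x y => hG.1 x y),
    List.nodup_reverse.mpr h.1.2.2⟩, by simpa using h.2.2, by simpa using h.2.1⟩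

lemma dist_comm (hG : G.IsUndirected) (u v : V) : G.dist u v = G.dist v u := by
  suffices h : ∀ u v, {c | ∃ l, G.IsPathFrom l u v ∧ G.weight l = c} ⊆
      {c | ∃ l, G.IsPathFrom l v u ∧ G.weight l = c} from
    congrArg sInf ((h u v).antisymm (h v u))
  rintro u v _ ⟨l, hl, rfl⟩
  exact ⟨l.reverse, hl.reverse hG, weight_reverse hG l⟩

lemma IsShortest.dist_eq_weight_of_infix {P B : List V} {x y : V} (hP : G.IsShortest P)
    (h : x :: (B ++ [y]) <:+: P) : G.dist x y = G.weight (x :: (B ++ [y])) :=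
  (hP.of_infix h (List.cons_ne_nil _ _)).dist_eq_weight rfl (by simp [List.getLast?_cons])

lemma IsShortest.dist_pos {P : List V} {x y : V} (hP : G.IsShortest P) (h : [x, y] <+ P) :
    0 < G.dist x y := by
  obtain ⟨A, B, C, rfl⟩ := List.exists_eq_of_pair_sublist h
  have hseg : x :: (B ++ [y]) <:+: A ++ x :: (B ++ y :: C) := ⟨A, C, by simp⟩
  rw [hP.dist_eq_weight_of_infix hseg]
  exact weight_pos (hP.1.2.1.infix hseg) (by simp)

lemma IsShortest.dist_add_dist {P : List V} {x y z : V} (hP : G.IsShortest P)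
    (h : [x, y, z] <+ P) : G.dist x y + G.dist y z = G.dist x z := by
  obtain ⟨A, B, C, D, rfl⟩ := List.exists_eq_of_triple_sublist h
  rw [hP.dist_eq_weight_of_infix (B := B) ⟨A, C ++ z :: D, by simp⟩,
    hP.dist_eq_weight_of_infix (B := C) ⟨A ++ x :: B, D, by simp⟩,
    hP.dist_eq_weight_of_infix (B := B ++ y :: C) ⟨A, D, by simp⟩]
  simpa using (G.weight_append_cons (x :: B) y (C ++ [z])).symm

lemma IsShortest.not_before_both_of_between (hG : G.IsUndirected) {P Q : List V} {x y z : V}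
    (hP : G.IsShortest P) (hQ : G.IsShortest Q) (hxyz : [x, y, z] <+ P)
    (hyx : [y, x] <+ Q) (hyz : [y, z] <+ Q) : False := by
  have hxz : x ≠ z := by
    have := hP.1.2.2.sublist ((List.sublist_cons_self y [z]).cons_cons x |>.trans hxyz)
    simpa using this
  have hP_sum := hP.dist_add_dist hxyz
  have hxy := hP.dist_pos (List.sublist_append_left [x, y] [z] |>.trans hxyz)
  have hsymm := dist_comm hG
  rcases List.pair_sublist_or_pair_sublist (hyx.subset (by simp)) (hyz.subset (by simp)) hxz
    with hQxz | hQzx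
  · have := hQ.dist_add_dist (hQ.1.2.2.triple_sublist hyx hQxz)
    linarith [hsymm x y]
  · have := hQ.dist_add_dist (hQ.1.2.2.triple_sublist hyz hQzx)
    have hyz_pos := hQ.dist_pos hyz
    linarith [hsymm x y, hsymm x z]

lemma IsShortest.firstIn_pair_sublist (hG : G.IsUndirected) {P Q : List V} {S : Set V}
    {a b v : V} (hP : G.IsShortest P) (hQ : G.IsShortest Q) (hv : FirstIn P S v) (hvQ : v ∈ Q)
    (haS : a ∈ S) (habP : [a, b] <+ P) (habQ : [a, b] <+ Q) : [v, b] <+ Q := by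
  by_cases hva : v = a
  · exact hva ▸ habQ
  have hvaP := hv.pair_sublist haS (habP.subset (by simp)) (Ne.symm hva)
  rcases List.pair_sublist_or_pair_sublist hvQ (habQ.subset (by simp)) hva with hvaQ | havQ
  · exact ((List.sublist_cons_self a [b]).cons_cons v).trans (hQ.1.2.2.triple_sublist hvaQ habQ)
  · exact (hP.not_before_both_of_between hG hQ (hP.1.2.2.triple_sublist hvaP habP)
      havQ habQ).elim

end WeightedGraph

/-- Edge-agreeing implies agreeing: if shortest paths `P₁` and `P₂` in an undirected
positively-weighted graph both traverse the edge `(a, b)` in the same direction,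
then they agree: the first vertex of `P₁` in `P₁ ∩ P₂` equals the first vertex of
`P₂` in `P₁ ∩ P₂`, and `|P₁ ∩ P₂| ≥ 2`. -/
theorem edge_agreeing_implies_agreeing {V : Type*} (G : WeightedGraph V)
    (hG : G.IsUndirected) (P₁ P₂ : List V) (a b : V)
    (h₁ : G.IsShortest P₁) (h₂ : G.IsShortest P₂)
    (hab₁ : [a, b] <:+: P₁) (hab₂ : [a, b] <:+: P₂) :
    (∃ v, FirstIn P₁ {x | x ∈ P₁ ∧ x ∈ P₂} v ∧ FirstIn P₂ {x | x ∈ P₁ ∧ x ∈ P₂} v) ∧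
    2 ≤ Set.ncard {x | x ∈ P₁ ∧ x ∈ P₂} := by
  set S : Set V := {x | x ∈ P₁ ∧ x ∈ P₂}
  have hab : a ≠ b := by simpa using h₁.1.2.2.sublist hab₁.sublist
  have haS : a ∈ S := ⟨hab₁.subset (by simp), hab₂.subset (by simp)⟩
  have hbS : b ∈ S := ⟨hab₁.subset (by simp), hab₂.subset (by simp)⟩
  refine ⟨?_, ?_⟩
  · obtain ⟨v₁, hv₁⟩ := exists_firstIn ⟨a, haS.1, haS⟩
    obtain ⟨v₂, hv₂⟩ := exists_firstIn ⟨a, haS.2, haS⟩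
    obtain rfl : v₁ = v₂ := by
      by_contra hne
      have hv₂b : [v₂, b] <+ P₁ := h₂.firstIn_pair_sublist hG h₁ hv₂ hv₂.1.1 haS
        hab₂.sublist hab₁.sublist
      have hv₂b_ne : b ≠ v₂ := by simpa [eq_comm] using h₁.1.2.2.sublist hv₂b
      exact h₁.not_before_both_of_between hG h₂
        (h₁.1.2.2.triple_sublist (hv₁.pair_sublist hv₂.1 hv₂.1.1 (Ne.symm hne)) hv₂b)
        (hv₂.pair_sublist hv₁.1 hv₁.1.2 hne) (hv₂.pair_sublist hbS hbS.2 hv₂b_ne)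
    exact ⟨_, hv₁, hv₂⟩
  · calc 2 = ({a, b} : Set V).ncard := (Set.ncard_pair hab).symm
      _ ≤ S.ncard := Set.ncard_le_ncard (by simp [Set.insert_subset_iff, haS, hbS])
          (P₁.finite_toSet.subset fun _ hx => hx.1)
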